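/- arXiv:1911.09854 — 2 statements merged into one kernel-verified Lean document; each statement's English description precedes it below -/
import Mathlib

section
/- Let (L,α) be a Hom-Lie-Yamaguti superalgebra. If D is a homogeneous α^k-derivation and D' is a homogeneous α^s-derivation, then the supercommutator [D,D'] = D∘D' - (-1)^{|D||D'|}D'∘D is a homogeneous α^{k+s}-derivation of L. -/
noncomputable section

/-- The Koszul sign `(-1)^{ij}` for parities `i j : ZMod 2`. -/
def sg (K : Type*) [Field K] (i j : ZMod 2) : K := (-1 : K) ^ (i.val * j.val)

/-- The underlying data of a Hom-Lie–Yamaguti superalgebra: a `ZMod 2`-grading,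
a binary bracket, a ternary bracket and a twisting map `α`. -/
structure HLYSData (K : Type*) [Field K] (L : Type*) [AddCommGroup L] [Module K L] where
  grade : ZMod 2 → Submodule K L
  br : L →ₗ[K] L →ₗ[K] L
  tr : L →ₗ[K] L →ₗ[K] L →ₗ[K] L
  α : L →ₗ[K] L

namespace HLYSData

variable {K : Type*} [Field K] {L : Type*} [AddCommGroup L] [Module K L]

/-- The iterate `α^k` of the structure map. -/
def pα (A : HLYSData K L) : ℕ → (L →ₗ[K] L)
  | 0 => LinearMap.id
  | n + 1 => A.α ∘ₗ A.pα n

/-- Axioms (SHLY1)–(SHLY8) of a Hom-Lie–Yamaguti superalgebra, stated on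
homogeneous elements. -/
structure IsHLYS (A : HLYSData K L) : Prop where
  grade_α : ∀ i x, x ∈ A.grade i → A.α x ∈ A.grade i
  grade_br : ∀ i j x y, x ∈ A.grade i → y ∈ A.grade j → A.br x y ∈ A.grade (i + j)
  grade_tr : ∀ i j m x y z, x ∈ A.grade i → y ∈ A.grade j → z ∈ A.grade m →
    A.tr x y z ∈ A.grade (i + j + m)
  shly1 : ∀ x y, A.α (A.br x y) = A.br (A.α x) (A.α y)
  shly2 : ∀ x y z, A.α (A.tr x y z) = A.tr (A.α x) (A.α y) (A.α z)
  shly3 : ∀ i j x y, x ∈ A.grade i → y ∈ A.grade j → A.br x y = -(sg K i j • A.br y x)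
  shly4 : ∀ i j x y z, x ∈ A.grade i → y ∈ A.grade j → A.tr x y z = -(sg K i j • A.tr y x z)
  shly5 : ∀ i j m x y z, x ∈ A.grade i → y ∈ A.grade j → z ∈ A.grade m →
    sg K i m • (A.br (A.br x y) (A.α z) + A.tr x y z)
      + sg K j i • (A.br (A.br y z) (A.α x) + A.tr y z x)
      + sg K m j • (A.br (A.br z x) (A.α y) + A.tr z x y) = 0
  shly6 : ∀ i j m n x y z u, x ∈ A.grade i → y ∈ A.grade j → z ∈ A.grade m → u ∈ A.grade n →
    sg K i m • A.tr (A.br x y) (A.α z) (A.α u)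
      + sg K j i • A.tr (A.br y z) (A.α x) (A.α u)
      + sg K m j • A.tr (A.br z x) (A.α y) (A.α u) = 0
  shly7 : ∀ i j m n x y u v, x ∈ A.grade i → y ∈ A.grade j → u ∈ A.grade m → v ∈ A.grade n →
    A.tr (A.α x) (A.α y) (A.br u v)
      = A.br (A.tr x y u) (A.α (A.α v))
        + sg K m (i + j) • A.br (A.α (A.α u)) (A.tr x y v)
  shly8 : ∀ i j m n p x y u v w, x ∈ A.grade i → y ∈ A.grade j → u ∈ A.grade m →
      v ∈ A.grade n → w ∈ A.grade p →
    A.tr (A.α (A.α x)) (A.α (A.α y)) (A.tr u v w)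
      = A.tr (A.tr x y u) (A.α (A.α v)) (A.α (A.α w))
        + sg K m (i + j) • A.tr (A.α (A.α u)) (A.tr x y v) (A.α (A.α w))
        + sg K (m + n) (i + j) • A.tr (A.α (A.α u)) (A.α (A.α v)) (A.tr x y w)

/-- `D` is a homogeneous linear map of degree `s`. -/
def IsHomog (A : HLYSData K L) (s : ZMod 2) (D : L →ₗ[K] L) : Prop :=
  ∀ i x, x ∈ A.grade i → D x ∈ A.grade (i + s)

/-- Homogeneous `α^k`-derivations of degree `s`. -/
def IsDer (A : HLYSData K L) (k : ℕ) (s : ZMod 2) (D : L →ₗ[K] L) : Prop :=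
  A.IsHomog s D ∧ (∀ x, D (A.α x) = A.α (D x)) ∧
  (∀ i j x y, x ∈ A.grade i → y ∈ A.grade j →
    D (A.br x y) = A.br (D x) (A.pα k y) + sg K s i • A.br (A.pα k x) (D y)) ∧
  (∀ i j m x y z, x ∈ A.grade i → y ∈ A.grade j → z ∈ A.grade m →
    D (A.tr x y z)
      = A.tr (D x) (A.pα k y) (A.pα k z)
        + sg K s i • A.tr (A.pα k x) (D y) (A.pα k z)
        + sg K s (i + j) • A.tr (A.pα k x) (A.pα k y) (D z))

/-- Homogeneous generalized `α^k`-derivations of degree `s`. -/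
def IsGDer (A : HLYSData K L) (k : ℕ) (s : ZMod 2) (D : L →ₗ[K] L) : Prop :=
  A.IsHomog s D ∧ ∃ D' D'' D''' : L →ₗ[K] L,
    A.IsHomog s D' ∧ A.IsHomog s D'' ∧ A.IsHomog s D''' ∧
    (∀ i j x y, x ∈ A.grade i → y ∈ A.grade j →
      A.br (D x) (A.pα k y) + sg K s i • A.br (A.pα k x) (D' y) = D'' (A.br x y)) ∧
    (∀ i j m x y z, x ∈ A.grade i → y ∈ A.grade j → z ∈ A.grade m →
      A.tr (D x) (A.pα k y) (A.pα k z)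
          + sg K s i • A.tr (A.pα k x) (D' y) (A.pα k z)
          + sg K s (i + j) • A.tr (A.pα k x) (A.pα k y) (D'' z) = D''' (A.tr x y z))

/-- Homogeneous `α^k`-quasiderivations of degree `s`. -/
def IsQDer (A : HLYSData K L) (k : ℕ) (s : ZMod 2) (D : L →ₗ[K] L) : Prop :=
  A.IsHomog s D ∧ ∃ D' D'' : L →ₗ[K] L, A.IsHomog s D' ∧ A.IsHomog s D'' ∧
    (∀ i j x y, x ∈ A.grade i → y ∈ A.grade j →
      A.br (D x) (A.pα k y) + sg K s i • A.br (A.pα k x) (D y) = D' (A.br x y)) ∧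
    (∀ i j m x y z, x ∈ A.grade i → y ∈ A.grade j → z ∈ A.grade m →
      A.tr (D x) (A.pα k y) (A.pα k z)
          + sg K s i • A.tr (A.pα k x) (D y) (A.pα k z)
          + sg K s (i + j) • A.tr (A.pα k x) (A.pα k y) (D z) = D'' (A.tr x y z))

/-- The `α^k`-centroid (homogeneous elements of degree `s`). -/
def IsCent (A : HLYSData K L) (k : ℕ) (s : ZMod 2) (D : L →ₗ[K] L) : Prop :=
  A.IsHomog s D ∧
  (∀ i j x y, x ∈ A.grade i → y ∈ A.grade j →
    A.br (D x) (A.pα k y) = D (A.br x y) ∧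
    sg K s i • A.br (A.pα k x) (D y) = D (A.br x y)) ∧
  (∀ i j m x y z, x ∈ A.grade i → y ∈ A.grade j → z ∈ A.grade m →
    A.tr (D x) (A.pα k y) (A.pα k z) = D (A.tr x y z) ∧
    sg K s i • A.tr (A.pα k x) (D y) (A.pα k z) = D (A.tr x y z) ∧
    sg K s (i + j) • A.tr (A.pα k x) (A.pα k y) (D z) = D (A.tr x y z))

/-- The `α^k`-quasicentroid (homogeneous elements of degree `s`). -/
def IsQCent (A : HLYSData K L) (k : ℕ) (s : ZMod 2) (D : L →ₗ[K] L) : Prop :=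
  A.IsHomog s D ∧
  (∀ i j x y, x ∈ A.grade i → y ∈ A.grade j →
    A.br (D x) (A.pα k y) = sg K s i • A.br (A.pα k x) (D y)) ∧
  (∀ i j m x y z, x ∈ A.grade i → y ∈ A.grade j → z ∈ A.grade m →
    A.tr (D x) (A.pα k y) (A.pα k z) = sg K s i • A.tr (A.pα k x) (D y) (A.pα k z) ∧
    A.tr (D x) (A.pα k y) (A.pα k z) = sg K s (i + j) • A.tr (A.pα k x) (A.pα k y) (D z))

/-- Central derivations (with twist `α^k`, degree `s`). -/
def IsZDer (A : HLYSData K L) (k : ℕ) (s : ZMod 2) (D : L →ₗ[K] L) : Prop :=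
  A.IsHomog s D ∧ (∀ x, D (A.α x) = A.α (D x)) ∧
  (∀ x y, A.br (D x) (A.pα k y) = 0) ∧ (∀ x y, D (A.br x y) = 0) ∧
  (∀ x y z, A.tr (D x) (A.pα k y) (A.pα k z) = 0) ∧ (∀ x y z, D (A.tr x y z) = 0)

/-- The center `Z(L)`. -/
def center (A : HLYSData K L) : Set L :=
  {x | ∀ y z, A.br x y = 0 ∧ A.tr x y z = 0}

end HLYSData

/-- The supercommutator of two endomorphisms of parities `a` and `b`. -/
def scomm (K : Type*) [Field K] {L : Type*} [AddCommGroup L] [Module K L]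
    (a b : ZMod 2) (f g : L →ₗ[K] L) : L →ₗ[K] L :=
  f ∘ₗ g - sg K a b • (g ∘ₗ f)

section Aux

variable {K : Type*} [Field K] {L : Type*} [AddCommGroup L] [Module K L]

lemma zmod2_cases (x : ZMod 2) : x = 0 ∨ x = 1 := by
  revert x; decide

lemma sg_zero_left (j : ZMod 2) : sg K 0 j = 1 := by
  simp [sg]

lemma sg_zero_right (i : ZMod 2) : sg K i 0 = 1 := by
  simp [sg]

lemma sg_one_one : sg K 1 1 = -1 := by
  show (-1 : K) ^ ((1 : ZMod 2).val * (1 : ZMod 2).val) = -1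
  norm_num [show (1 : ZMod 2).val = 1 from rfl]

lemma one_one_zmod2 : (1 + 1 : ZMod 2) = 0 := rfl

namespace HLYSData

lemma pα_add (A : HLYSData K L) (k s : ℕ) (x : L) :
    A.pα (k + s) x = A.pα k (A.pα s x) := by
  induction k with
  | zero => simp [HLYSData.pα, Nat.zero_add]
  | succ n ih =>
      have h : n + 1 + s = (n + s) + 1 := by omega
      rw [h]
      show A.α (A.pα (n + s) x) = A.α (A.pα n (A.pα s x))
      rw [ih]

lemma pα_comm (A : HLYSData K L) (D : L →ₗ[K] L) (h : ∀ x, D (A.α x) = A.α (D x))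
    (n : ℕ) (x : L) : D (A.pα n x) = A.pα n (D x) := by
  induction n with
  | zero => rfl
  | succ m ih =>
      show D (A.α (A.pα m x)) = A.α (A.pα m (D x))
      rw [h, ih]

lemma grade_pα {A : HLYSData K L} (hA : A.IsHLYS) (n : ℕ) (i : ZMod 2) (x : L)
    (hx : x ∈ A.grade i) : A.pα n x ∈ A.grade i := by
  induction n with
  | zero => exact hx
  | succ m ih => exact hA.grade_α i _ ih

end HLYSData

end Aux

set_option maxHeartbeats 4000000 in
/-- the supercommutator of an `α^k`-derivation and an
`α^s`-derivation is an `α^{k+s}`-derivation. -/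
theorem scomm_of_derivations_is_derivation
    {K : Type*} [Field K] {L : Type*} [AddCommGroup L] [Module K L]
    (A : HLYSData K L) (hA : A.IsHLYS)
    (k s : ℕ) (a b : ZMod 2) (D D' : L →ₗ[K] L)
    (hD : A.IsDer k a D) (hD' : A.IsDer s b D') :
    A.IsDer (k + s) (a + b) (scomm K a b D D') := by
  obtain ⟨hDh, hDα, hDbr, hDtr⟩ := hD
  obtain ⟨hD'h, hD'α, hD'br, hD'tr⟩ := hD'
  have hDp := A.pα_comm D hDα
  have hD'p := A.pα_comm D' hD'α
  have hks : ∀ z : L, A.pα k (A.pα s z) = A.pα (k + s) z := fun z => (A.pα_add k s z).symm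
  have hsk : ∀ z : L, A.pα s (A.pα k z) = A.pα (k + s) z := by
    intro z; rw [Nat.add_comm]; exact (A.pα_add s k z).symm
  refine ⟨?_, ?_, ?_, ?_⟩
  · -- homogeneity
    intro i x hx
    simp only [scomm, LinearMap.sub_apply, LinearMap.smul_apply, LinearMap.comp_apply]
    refine Submodule.sub_mem _ ?_ (Submodule.smul_mem _ _ ?_)
    · have h1 := hDh (i + b) _ (hD'h i x hx)
      have : i + b + a = i + (a + b) := by ring
      rwa [this] at h1
    · have h1 := hD'h (i + a) _ (hDh i x hx)
      have : i + a + b = i + (a + b) := by ring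
      rwa [this] at h1
  · -- commutes with α
    intro x
    simp only [scomm, LinearMap.sub_apply, LinearMap.smul_apply, LinearMap.comp_apply,
      hDα, hD'α, map_sub, map_smul]
  · -- binary Leibniz
    intro i j x y hx hy
    have hx' := hD'h i x hx
    have hy' := hD'h j y hy
    have hxD := hDh i x hx
    have hyD := hDh j y hy
    have hsx := HLYSData.grade_pα hA s i x hx
    have hsy := HLYSData.grade_pα hA s j y hy
    have hkx := HLYSData.grade_pα hA k i x hx
    have hky := HLYSData.grade_pα hA k j y hy
    simp only [scomm, LinearMap.sub_apply, LinearMap.smul_apply, LinearMap.comp_apply,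
      hD'br i j x y hx hy, hDbr i j x y hx hy, map_add, map_smul,
      hDbr (i + b) j _ _ hx' hsy, hDbr i (j + b) _ _ hsx hy',
      hD'br (i + a) j _ _ hxD hky, hD'br i (j + a) _ _ hkx hyD,
      map_sub, hDp, hD'p, hks, hsk]
    rcases zmod2_cases a with rfl | rfl <;> rcases zmod2_cases b with rfl | rfl <;>
      rcases zmod2_cases i with rfl | rfl <;>
      simp only [sg_zero_left, sg_zero_right, sg_one_one, one_one_zmod2, zero_add, add_zero] <;>
      module
  · -- ternary Leibniz
    intro i j m x y z hx hy hz
    have hx' := hD'h i x hx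
    have hy' := hD'h j y hy
    have hz' := hD'h m z hz
    have hxD := hDh i x hx
    have hyD := hDh j y hy
    have hzD := hDh m z hz
    have hsx := HLYSData.grade_pα hA s i x hx
    have hsy := HLYSData.grade_pα hA s j y hy
    have hsz := HLYSData.grade_pα hA s m z hz
    have hkx := HLYSData.grade_pα hA k i x hx
    have hky := HLYSData.grade_pα hA k j y hy
    have hkz := HLYSData.grade_pα hA k m z hz
    simp only [scomm, LinearMap.sub_apply, LinearMap.smul_apply, LinearMap.comp_apply,
      hD'tr i j m x y z hx hy hz, hDtr i j m x y z hx hy hz, map_add, map_smul,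
      hDtr (i + b) j m _ _ _ hx' hsy hsz, hDtr i (j + b) m _ _ _ hsx hy' hsz,
      hDtr i j (m + b) _ _ _ hsx hsy hz',
      hD'tr (i + a) j m _ _ _ hxD hky hkz, hD'tr i (j + a) m _ _ _ hkx hyD hkz,
      hD'tr i j (m + a) _ _ _ hkx hky hzD,
      map_sub, hDp, hD'p, hks, hsk]
    rcases zmod2_cases a with rfl | rfl <;> rcases zmod2_cases b with rfl | rfl <;>
      rcases zmod2_cases i with rfl | rfl <;> rcases zmod2_cases j with rfl | rfl <;>
      simp only [sg_zero_left, sg_zero_right, sg_one_one, one_one_zmod2, zero_add, add_zero] <;>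
      module
end
end

section
/- Let (L,α) be a Hom-Lie-Yamaguti superalgebra and let (f_t, g_t) and (f'_t, g'_t) be two equivalent 1-parameter formal deformations of L via a formal isomorphism φ_t = id + Σ_{i≥1} φ_i t^i. Then the infinitesimals satisfy f₁(x₁,x₂) - f'₁(x₁,x₂) = [φ₁(x₁),x₂] + [x₁,φ₁(x₂)] - φ₁([x₁,x₂]) and g₁(x₁,x₂,x₃) - g'₁(x₁,x₂,x₃) = {φ₁(x₁),x₂,x₃} + {x₁,φ₁(x₂),x₃} + {x₁,x₂,φ₁(x₃)} - φ₁({x₁,x₂,x₃}); i.e., (f₁ - f'₁, g₁ - g'₁) is a coboundary, so (f₁,g₁) and (f'₁,g'₁) define the same cohomology class in H²(L,L) × H³(L,L). -/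
noncomputable section

open Finset in
/-- A 1-parameter formal deformation of a Hom-Lie–Yamaguti superalgebra,
described by the coefficients `f n`, `g n` of `f_t = Σ f_n tⁿ`,
`g_t = Σ g_n tⁿ` with `f 0`, `g 0` the original brackets; the conditions are
the deformation equations (5.9)–(5.16), i.e. the levelwise Hom-Lie–Yamaguti
superalgebra axioms for `(L[[t]], f_t, g_t, α)`. -/
def IsDeformation {K : Type*} [Field K] {L : Type*} [AddCommGroup L] [Module K L]
    (A : HLYSData K L)
    (f : ℕ → L →ₗ[K] L →ₗ[K] L) (g : ℕ → L →ₗ[K] L →ₗ[K] L →ₗ[K] L) : Prop :=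
  f 0 = A.br ∧ g 0 = A.tr ∧
  (∀ n x y, A.α (f n x y) = f n (A.α x) (A.α y)) ∧
  (∀ n x y z, A.α (g n x y z) = g n (A.α x) (A.α y) (A.α z)) ∧
  (∀ n i j x y, x ∈ A.grade i → y ∈ A.grade j → f n x y = -(sg K i j • f n y x)) ∧
  (∀ n i j x y z, x ∈ A.grade i → y ∈ A.grade j → g n x y z = -(sg K i j • g n y x z)) ∧
  (∀ n i j m x y z, x ∈ A.grade i → y ∈ A.grade j → z ∈ A.grade m →
    sg K i m • ((∑ p ∈ antidiagonal n, f p.1 (f p.2 x y) (A.α z)) + g n x y z)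
      + sg K j i • ((∑ p ∈ antidiagonal n, f p.1 (f p.2 y z) (A.α x)) + g n y z x)
      + sg K m j • ((∑ p ∈ antidiagonal n, f p.1 (f p.2 z x) (A.α y)) + g n z x y) = 0) ∧
  (∀ n i j m x y z u, x ∈ A.grade i → y ∈ A.grade j → z ∈ A.grade m →
    sg K i m • (∑ p ∈ antidiagonal n, g p.1 (f p.2 x y) (A.α z) (A.α u))
      + sg K j i • (∑ p ∈ antidiagonal n, g p.1 (f p.2 y z) (A.α x) (A.α u))
      + sg K m j • (∑ p ∈ antidiagonal n, g p.1 (f p.2 z x) (A.α y) (A.α u)) = 0) ∧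
  (∀ n i j m x y u v, x ∈ A.grade i → y ∈ A.grade j → u ∈ A.grade m →
    (∑ p ∈ antidiagonal n, g p.1 (A.α x) (A.α y) (f p.2 u v))
      = ∑ p ∈ antidiagonal n,
          (f p.1 (g p.2 x y u) (A.α (A.α v))
            + sg K m (i + j) • f p.1 (A.α (A.α u)) (g p.2 x y v))) ∧
  (∀ n i j m l x y u v w, x ∈ A.grade i → y ∈ A.grade j → u ∈ A.grade m →
      v ∈ A.grade l →
    (∑ p ∈ antidiagonal n, g p.1 (A.α (A.α x)) (A.α (A.α y)) (g p.2 u v w))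
      = ∑ p ∈ antidiagonal n,
          (g p.1 (g p.2 x y u) (A.α (A.α v)) (A.α (A.α w))
            + sg K m (i + j) • g p.1 (A.α (A.α u)) (g p.2 x y v) (A.α (A.α w))
            + sg K (m + l) (i + j) • g p.1 (A.α (A.α u)) (A.α (A.α v)) (g p.2 x y w)))

open Finset in
/-- Equivalence of two 1-parameter formal deformations via a formal isomorphism
`φ_t = Σ φ_n tⁿ` with `φ 0 = id`, `φ_t ∘ α = α ∘ φ_t`,
`φ_t (f_t x y) = f'_t (φ_t x) (φ_t y)` and
`φ_t (g_t x y z) = g'_t (φ_t x) (φ_t y) (φ_t z)`, stated coefficientwise. -/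
def AreEquivalentDeformations {K : Type*} [Field K] {L : Type*} [AddCommGroup L]
    [Module K L] (A : HLYSData K L)
    (f f' : ℕ → L →ₗ[K] L →ₗ[K] L) (g g' : ℕ → L →ₗ[K] L →ₗ[K] L →ₗ[K] L)
    (φ : ℕ → L →ₗ[K] L) : Prop :=
  φ 0 = LinearMap.id ∧ (∀ n x, φ n (A.α x) = A.α (φ n x)) ∧
  (∀ n x y,
    (∑ p ∈ antidiagonal n, φ p.1 (f p.2 x y))
      = ∑ p ∈ antidiagonal n, ∑ q ∈ antidiagonal p.2, f' p.1 (φ q.1 x) (φ q.2 y)) ∧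
  (∀ n x y z,
    (∑ p ∈ antidiagonal n, φ p.1 (g p.2 x y z))
      = ∑ p ∈ antidiagonal n, ∑ q ∈ antidiagonal p.2, ∑ r ∈ antidiagonal q.2,
          g' p.1 (φ q.1 x) (φ r.1 y) (φ r.2 z))

namespace AreEquivalentDeformations

open Finset

variable {K : Type*} [Field K] {L : Type*} [AddCommGroup L] [Module K L] {A : HLYSData K L}
  {f f' : ℕ → L →ₗ[K] L →ₗ[K] L} {g g' : ℕ → L →ₗ[K] L →ₗ[K] L →ₗ[K] L} {φ : ℕ → L →ₗ[K] L}

theorem coeff_one_br (h : AreEquivalentDeformations A f f' g g' φ) (x y : L) :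
    f 1 x y + φ 1 (f 0 x y) = f' 1 x y + f' 0 (φ 1 x) y + f' 0 x (φ 1 y) := by
  obtain ⟨hφ₀, -, hf, -⟩ := h
  have h₁ := hf 1 x y
  simp only [Nat.sum_antidiagonal_succ, Nat.antidiagonal_zero, sum_singleton, zero_add, hφ₀,
    LinearMap.id_apply] at h₁
  rw [h₁]
  abel

theorem coeff_one_tr (h : AreEquivalentDeformations A f f' g g' φ) (x y z : L) :
    g 1 x y z + φ 1 (g 0 x y z)
      = g' 1 x y z + g' 0 (φ 1 x) y z + g' 0 x (φ 1 y) z + g' 0 x y (φ 1 z) := by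
  obtain ⟨hφ₀, -, -, hg⟩ := h
  have h₁ := hg 1 x y z
  simp only [Nat.sum_antidiagonal_succ, Nat.antidiagonal_zero, sum_singleton, zero_add, hφ₀,
    LinearMap.id_apply] at h₁
  rw [h₁]
  abel

end AreEquivalentDeformations

theorem equivalent_deformations_have_cohomologous_infinitesimals_general
    {K : Type*} [Field K] {L : Type*} [AddCommGroup L] [Module K L]
    (A : HLYSData K L)
    (f f' : ℕ → L →ₗ[K] L →ₗ[K] L) (g g' : ℕ → L →ₗ[K] L →ₗ[K] L →ₗ[K] L)
    (φ : ℕ → L →ₗ[K] L)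
    (hfg : IsDeformation A f g) (hfg' : IsDeformation A f' g')
    (heq : AreEquivalentDeformations A f f' g g' φ) :
    (∀ x y, f 1 x y - f' 1 x y
        = A.br (φ 1 x) y + A.br x (φ 1 y) - φ 1 (A.br x y)) ∧
    (∀ x y z, g 1 x y z - g' 1 x y z
        = A.tr (φ 1 x) y z + A.tr x (φ 1 y) z + A.tr x y (φ 1 z)
          - φ 1 (A.tr x y z)) := by
  obtain ⟨hf₀, hg₀, -⟩ := hfg
  obtain ⟨hf₀', hg₀', -⟩ := hfg'
  constructor
  · intro x y
    have h := heq.coeff_one_br x y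
    rw [hf₀, hf₀'] at h
    linear_combination (norm := abel) h
  · intro x y z
    have h := heq.coeff_one_tr x y z
    rw [hg₀, hg₀'] at h
    linear_combination (norm := abel) h

/-- equivalent 1-parameter formal deformations have cohomologous
infinitesimals: `(f₁ - f'₁, g₁ - g'₁)` is the coboundary of `φ₁`, so `(f₁, g₁)`
and `(f'₁, g'₁)` define the same class in `H²(L,L) × H³(L,L)`. -/
theorem equivalent_deformations_have_cohomologous_infinitesimals
    {K : Type*} [Field K] {L : Type*} [AddCommGroup L] [Module K L]
    (A : HLYSData K L) (hA : A.IsHLYS)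
    (f f' : ℕ → L →ₗ[K] L →ₗ[K] L) (g g' : ℕ → L →ₗ[K] L →ₗ[K] L →ₗ[K] L)
    (φ : ℕ → L →ₗ[K] L)
    (hfg : IsDeformation A f g) (hfg' : IsDeformation A f' g')
    (heq : AreEquivalentDeformations A f f' g g' φ) :
    (∀ x y, f 1 x y - f' 1 x y
        = A.br (φ 1 x) y + A.br x (φ 1 y) - φ 1 (A.br x y)) ∧
    (∀ x y z, g 1 x y z - g' 1 x y z
        = A.tr (φ 1 x) y z + A.tr x (φ 1 y) z + A.tr x y (φ 1 z)
          - φ 1 (A.tr x y z)) :=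
  equivalent_deformations_have_cohomologous_infinitesimals_general A f f' g g' φ hfg hfg' heq
end
end
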